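/- Let ψ be an abelian map on a group G. For every n ≥ 1, the map δ is a group homomorphism from (G, ∘_n) to (G, ∘_{n-1}); that is, δ(g ∘_n h) = δ(g) ∘_{n-1} δ(h) for all g, h ∈ G. -/

import Mathlib

/-!
Write `p = ψ_n(g)`, so that `δⁿ(g) = g p⁻¹`. By induction `ψ_n(g)` lies in the abelian subgroup
`ψ(G)` and `ψ_n(g⁻¹) = ψ_n(g)⁻¹`, hence `g ∘_n h = g (p⁻¹ h p)`. Since `p` commutes with `ψ(G)`,
`δ` commutes with conjugation by `p`, and `δ(g x) = g δ(x) ψ(g)⁻¹`; so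
`δ(g ∘_n h) = g p⁻¹ δ(h) p ψ(g)⁻¹`. On the other side `ψ_{n-1}(δ g) = p ψ(g)⁻¹`, which gives
the same element for `δ(g) ∘_{n-1} δ(h)`.
-/

/-- `aDelta ψ g = g · ψ(g⁻¹)`, the map `δ = 1 - ψ`. -/
def aDelta {G : Type*} [Group G] (ψ : G → G) (g : G) : G := g * ψ g⁻¹

/-- `aPsi ψ n g = (δⁿ(g))⁻¹ · g`, the map `ψ_n = -(1-ψ)ⁿ + 1` (so `ψ_0 = 0`, `ψ_1 = ψ`). -/
def aPsi {G : Type*} [Group G] (ψ : G → G) (n : ℕ) (g : G) : G :=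
  ((aDelta ψ)^[n] g)⁻¹ * g

/-- `g ∘_n h = g · ψ_n(g⁻¹) · h · ψ_n(g)`. -/
def aCirc {G : Type*} [Group G] (ψ : G → G) (n : ℕ) (g h : G) : G :=
  g * aPsi ψ n g⁻¹ * h * aPsi ψ n g

namespace AbelianMap

variable {G : Type*} [Group G]

theorem iterate_aDelta (ψ : G → G) (n : ℕ) (g : G) :
    (aDelta ψ)^[n] g = g * (aPsi ψ n g)⁻¹ := by
  simp [aPsi]

variable (f : G →* G)

theorem aDelta_mul (x y : G) : aDelta f (x * y) = x * aDelta f y * (f x)⁻¹ := by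
  simp [aDelta, mul_assoc]

theorem aPsi_succ (n : ℕ) (g : G) : aPsi f (n + 1) g = aPsi f n (aDelta f g) * f g := by
  simp [aPsi, aDelta, mul_assoc]

theorem aPsi_succ' (n : ℕ) (g : G) :
    aPsi f (n + 1) g = f g * (f (aPsi f n g))⁻¹ * aPsi f n g := by
  rw [aPsi, Function.iterate_succ_apply', iterate_aDelta, aDelta_mul]
  simp [aDelta, mul_assoc]

theorem aPsi_mem_range (n : ℕ) (g : G) : aPsi f n g ∈ f.range := by
  induction n generalizing g with
  | zero => simp [aPsi]
  | succ n ih => rw [aPsi_succ]; exact mul_mem (ih _) ⟨g, rfl⟩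

variable {f} (hf : ∀ a b, Commute (f a) (f b))
include hf

theorem commute_of_mem_range {x y : G} (hx : x ∈ f.range) (hy : y ∈ f.range) : Commute x y := by
  obtain ⟨a, rfl⟩ := hx
  obtain ⟨b, rfl⟩ := hy
  exact hf a b

theorem aPsi_inv (n : ℕ) (g : G) : aPsi f n g⁻¹ = (aPsi f n g)⁻¹ := by
  induction n with
  | zero => simp [aPsi]
  | succ n ih =>
    rw [aPsi_succ', aPsi_succ', ih, map_inv, map_inv, inv_inv]
    have hp := aPsi_mem_range f n g
    generalize aPsi f n g = p at hp ⊢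
    have hcomm : Commute (f g)⁻¹ (f p * p⁻¹) :=
      commute_of_mem_range hf (inv_mem ⟨g, rfl⟩) (mul_mem ⟨p, rfl⟩ (inv_mem hp))
    have hcomm' : Commute (f p) p⁻¹ := commute_of_mem_range hf ⟨p, rfl⟩ (inv_mem hp)
    rw [mul_assoc, hcomm.eq, hcomm'.eq, mul_inv_rev, mul_inv_rev, inv_inv, mul_assoc]

theorem aCirc_eq (n : ℕ) (g h : G) :
    aCirc f n g h = g * ((aPsi f n g)⁻¹ * h * aPsi f n g) := by
  rw [aCirc, aPsi_inv hf]
  group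

theorem aDelta_conj {x : G} (hx : x ∈ f.range) (h : G) :
    aDelta f (x⁻¹ * h * x) = x⁻¹ * aDelta f h * x := by
  have hfx : Commute (f x) (f h)⁻¹ := (hf _ _).inv_right
  have hx' : Commute x (f h)⁻¹ := commute_of_mem_range hf hx (inv_mem ⟨h, rfl⟩)
  simp only [aDelta, map_inv, map_mul, mul_inv_rev, inv_inv]
  rw [← hfx.eq, inv_mul_cancel_left]
  simp only [mul_assoc, hx'.eq]

end AbelianMap

open AbelianMap in
/-- For `n ≥ 1`, `δ` is a homomorphism `(G, ∘_n) → (G, ∘_{n-1})`. -/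
theorem stmt17 {G : Type*} [Group G] (ψ : G → G)
    (hψ : ∀ a b : G, ψ (a * b) = ψ a * ψ b)
    (hab : ∀ a b : G, ψ a * ψ b = ψ b * ψ a)
    (n : ℕ) (hn : 1 ≤ n) (g h : G) :
    aDelta ψ (aCirc ψ n g h) = aCirc ψ (n - 1) (aDelta ψ g) (aDelta ψ h) := by
  set f := MonoidHom.mk' ψ hψ
  obtain ⟨m, rfl⟩ := Nat.exists_eq_add_of_le' hn
  have haPsi_aDelta : aPsi f m (aDelta f g) = aPsi f (m + 1) g * (f g)⁻¹ := by
    rw [aPsi_succ, mul_inv_cancel_right]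
  change aDelta f (aCirc f (m + 1) g h) = aCirc f m (aDelta f g) (aDelta f h)
  rw [aCirc_eq hab, aCirc_eq hab, aDelta_mul, aDelta_conj hab (aPsi_mem_range f _ g), haPsi_aDelta]
  simp only [aDelta, map_inv, mul_inv_rev, inv_inv, mul_assoc, inv_mul_cancel_left]
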